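/- For every x ∈ X and all ordinals α, β with ‖x‖ ≤ α ≤ β < λ, one has x ∈ V_β(x) ⊆ V_α(x); consequently the collection τ := {U ⊆ X : for every x ∈ U there exists α ∈ [‖x‖,λ) with V_α(x) ⊆ U} is a topology on X. -/

import Mathlib

/-!
Membership `x ∈ V_α(x)` and antitonicity of `α ↦ V_α(x)` are checked separately for
`x(0) = 0, 1, 2`. The only delicate case is `x(0) = 1`, where shrinking `[α, λ)` to `[β, λ)`
loses the constraint `y ≠ 1` on `[α, β)`; it is recovered because there `y` agrees with `x`,
which is `2` above `‖x‖ ≤ α`. Antitonicity makes `τ` closed under binary intersections (take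
`max α β`), unions are immediate, and `X` is open because `‖x‖ < λ`: the support of `x` is
finite and `λ` is a limit ordinal.
-/

universe u v

open Ordinal Set Topology Cardinal

namespace LawsonExample

-- `λ → {0,1,2}` is encoded as the functions on all ordinals that are `2` from `λ` on.
def Xset (lam : Cardinal.{u}) : Set (Ordinal.{u} → Fin 3) :=
  {x | (∀ γ : Ordinal.{u}, lam.ord ≤ γ → x γ = 2) ∧ {γ : Ordinal.{u} | x γ ≠ 2}.Finite}

noncomputable def nrm (x : Ordinal.{u} → Fin 3) : Ordinal.{u} :=
  sInf {α | ∀ γ, α ≤ γ → x γ = 2}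

noncomputable def Vnbhd (lam : Cardinal.{u}) (x : ↥(Xset lam)) (α : Ordinal.{u}) :
    Set ↥(Xset lam) :=
  if x.1 0 = 2 then {x}
  else if x.1 0 = 1 then
    {y | (∀ γ, 1 ≤ γ → γ < α → y.1 γ = x.1 γ) ∧
         (∀ γ, α ≤ γ → γ < lam.ord → y.1 γ ≠ 1) ∧
         (y.1 0 = 1 ∨ (y.1 0 = 2 ∧ α < nrm y.1))}
  else
    {y | (∀ γ, 1 ≤ γ → γ < α → y.1 γ = x.1 γ) ∧
         (y.1 0 = 0 ∨ (y.1 0 = 2 ∧ α < nrm y.1 ∧ y.1 (Ordinal.pred (nrm y.1)) = 1))}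

def tauSet (lam : Cardinal.{u}) : Set (Set ↥(Xset lam)) :=
  {U | ∀ x ∈ U, ∃ α : Ordinal.{u}, nrm x.1 ≤ α ∧ α < lam.ord ∧ Vnbhd lam x α ⊆ U}

lemma nrm_spec {lam : Cardinal.{u}} (x : ↥(Xset lam)) {γ : Ordinal.{u}}
    (h : nrm x.1 ≤ γ) : x.1 γ = 2 :=
  csInf_mem (s := {α | ∀ γ, α ≤ γ → x.1 γ = 2}) ⟨lam.ord, x.2.1⟩ γ h

lemma nrm_le {x : Ordinal.{u} → Fin 3} {α : Ordinal.{u}} (h : ∀ γ, α ≤ γ → x γ = 2) :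
    nrm x ≤ α :=
  csInf_le' h

lemma lt_nrm_of_ne_two {lam : Cardinal.{u}} (x : ↥(Xset lam)) {γ : Ordinal.{u}}
    (h : x.1 γ ≠ 2) : γ < nrm x.1 :=
  lt_of_not_ge fun hγ => h (nrm_spec x hγ)

-- The successors of the finitely many points of the support are bounded below the limit `λ`.
lemma nrm_lt {lam : Cardinal.{u}} (hlam : ℵ₀ ≤ lam) (x : ↥(Xset lam)) :
    nrm x.1 < lam.ord := by
  have hlim : Order.IsSuccLimit lam.ord := Cardinal.isSuccLimit_ord hlam
  set S := x.2.2.toFinset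
  have hsupp_lt : ∀ γ ∈ S, γ < lam.ord := fun γ hγ =>
    lt_of_not_ge fun h => (x.2.2.mem_toFinset.1 hγ) (x.2.1 γ h)
  refine lt_of_le_of_lt (nrm_le (α := S.sup Order.succ) fun γ hγ => ?_)
    ((Finset.sup_lt_iff hlim.bot_lt).2 fun γ h => hlim.succ_lt (hsupp_lt γ h))
  by_contra hne
  exact (Order.lt_succ γ).not_ge ((Finset.le_sup (x.2.2.mem_toFinset.2 hne)).trans hγ)

lemma fin3_cases (a : Fin 3) : a = 0 ∨ a = 1 ∨ a = 2 := by revert a; decide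

lemma mem_Vnbhd_self {lam : Cardinal.{u}} (x : ↥(Xset lam)) {α : Ordinal.{u}}
    (h : nrm x.1 ≤ α) : x ∈ Vnbhd lam x α := by
  rcases fin3_cases (x.1 0) with h0 | h0 | h0
  · simp [Vnbhd, h0]
  · simp only [Vnbhd, h0, Fin.reduceEq, if_false, if_true]
    refine ⟨fun _ _ _ => rfl, fun γ hγ _ => ?_, Or.inl h0⟩
    simp [nrm_spec x (h.trans hγ)]
  · simp [Vnbhd, h0]

lemma Vnbhd_mono {lam : Cardinal.{u}} (x : ↥(Xset lam)) {α β : Ordinal.{u}}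
    (hα : nrm x.1 ≤ α) (hαβ : α ≤ β) : Vnbhd lam x β ⊆ Vnbhd lam x α := by
  rcases fin3_cases (x.1 0) with h0 | h0 | h0
  · simp only [Vnbhd, h0, Fin.reduceEq, if_false]
    rintro y ⟨hagree, hy⟩
    exact ⟨fun γ h1 hγ => hagree γ h1 (hγ.trans_le hαβ),
      hy.imp_right fun ⟨h2, hlt, hpred⟩ => ⟨h2, hαβ.trans_lt hlt, hpred⟩⟩
  · simp only [Vnbhd, h0, Fin.reduceEq, if_false, if_true]
    rintro y ⟨hagree, hnot1, hy⟩
    have hα1 : 1 ≤ α :=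
      Order.one_le_iff_pos.2 ((lt_nrm_of_ne_two x (by simp [h0])).trans_le hα)
    refine ⟨fun γ h1 hγ => hagree γ h1 (hγ.trans_le hαβ), fun γ hαγ hγlam => ?_,
      hy.imp_right fun ⟨h2, hlt⟩ => ⟨h2, hαβ.trans_lt hlt⟩⟩
    rcases lt_or_ge γ β with hγβ | hβγ
    · simp [hagree γ (hα1.trans hαγ) hγβ, nrm_spec x (hα.trans hαγ)]
    · exact hnot1 γ hβγ hγlam
  · simp [Vnbhd, h0]

noncomputable def tau (lam : Cardinal.{u}) (hlam : ℵ₀ ≤ lam) :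
    TopologicalSpace ↥(Xset lam) where
  IsOpen U := U ∈ tauSet lam
  isOpen_univ := fun x _ =>
    ⟨nrm x.1, le_rfl, nrm_lt hlam x, subset_univ _⟩
  isOpen_inter := by
    intro U V hU hV x hx
    obtain ⟨α, hα1, hα2, hα3⟩ := hU x hx.1
    obtain ⟨β, hβ1, hβ2, hβ3⟩ := hV x hx.2
    refine ⟨max α β, le_trans hα1 (le_max_left _ _), max_lt hα2 hβ2, fun y hy => ?_⟩
    exact ⟨hα3 (Vnbhd_mono x hα1 (le_max_left _ _) hy),
           hβ3 (Vnbhd_mono x hβ1 (le_max_right _ _) hy)⟩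
  isOpen_sUnion := by
    intro S hS x hx
    obtain ⟨U, hU, hxU⟩ := hx
    obtain ⟨α, hα1, hα2, hα3⟩ := hS U hU x hxU
    exact ⟨α, hα1, hα2, fun y hy => ⟨U, hU, hα3 hy⟩⟩

/-- The semilattice operation of `X`: pointwise minimum. -/
noncomputable def pmin (lam : Cardinal.{u}) (x y : ↥(Xset lam)) : ↥(Xset lam) :=
  ⟨fun γ => min (x.1 γ) (y.1 γ), by
    constructor
    · intro γ hγ
      show min (x.1 γ) (y.1 γ) = 2
      rw [x.2.1 γ hγ, y.2.1 γ hγ, min_self]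
    · refine (x.2.2.union y.2.2).subset fun γ hγ => ?_
      have hγ' : min (x.1 γ) (y.1 γ) ≠ 2 := hγ
      simp only [mem_union, mem_ofPred_eq]
      by_contra hc
      push Not at hc
      rw [hc.1, hc.2, min_self] at hγ'
      exact hγ' rfl⟩

def IsBase {X : Type v} (t : TopologicalSpace X) (B : Set (Set X)) : Prop :=
  (∀ U ∈ B, IsOpen[t] U) ∧ ∀ U, IsOpen[t] U → ∃ S ⊆ B, U = ⋃₀ S

/-- The family `ℬ = {V_α(x) : x ∈ X, α ∈ [‖x‖, λ)}`. -/
def Vfamily (lam : Cardinal.{u}) : Set (Set ↥(Xset lam)) :=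
  {W | ∃ (x : ↥(Xset lam)) (α : Ordinal.{u}), nrm x.1 ≤ α ∧ α < lam.ord ∧ W = Vnbhd lam x α}

noncomputable def weight {X : Type v} (t : TopologicalSpace X) : Cardinal.{v} :=
  sInf {c : Cardinal.{v} | ∃ B : Set (Set X), IsBase t B ∧ c = Cardinal.mk ↥B}

/-- The function `𝟎_β`, with `𝟎_β β = 0` and `𝟎_β γ = 2` for `γ ≠ β`. -/
noncomputable def zeroF (β : Ordinal.{u}) : Ordinal.{u} → Fin 3 :=
  fun γ => if γ = β then 0 else 2

/-- The function `𝟏_β`, with `𝟏_β β = 1` and `𝟏_β γ = 2` for `γ ≠ β`. -/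
noncomputable def oneF (β : Ordinal.{u}) : Ordinal.{u} → Fin 3 :=
  fun γ => if γ = β then 1 else 2

lemma zeroF_mem (lam : Cardinal.{u}) {β : Ordinal.{u}} (h : β < lam.ord) :
    zeroF β ∈ Xset lam := by
  constructor
  · intro γ hγ
    have hne : γ ≠ β := fun e => absurd h (not_lt.2 (e ▸ hγ))
    simp [zeroF, hne]
  · refine (finite_singleton β).subset fun γ hγ => ?_
    simp only [mem_ofPred_eq, zeroF] at hγ
    by_contra hc
    simp only [mem_singleton_iff] at hc
    rw [if_neg hc] at hγ
    exact hγ rfl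

lemma oneF_mem (lam : Cardinal.{u}) {β : Ordinal.{u}} (h : β < lam.ord) :
    oneF β ∈ Xset lam := by
  constructor
  · intro γ hγ
    have hne : γ ≠ β := fun e => absurd h (not_lt.2 (e ▸ hγ))
    simp [oneF, hne]
  · refine (finite_singleton β).subset fun γ hγ => ?_
    simp only [mem_ofPred_eq, oneF] at hγ
    by_contra hc
    simp only [mem_singleton_iff] at hc
    rw [if_neg hc] at hγ
    exact hγ rfl

noncomputable def zeroE (lam : Cardinal.{u}) {β : Ordinal.{u}} (h : β < lam.ord) :
    ↥(Xset lam) := ⟨zeroF β, zeroF_mem lam h⟩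

noncomputable def oneE (lam : Cardinal.{u}) {β : Ordinal.{u}} (h : β < lam.ord) :
    ↥(Xset lam) := ⟨oneF β, oneF_mem lam h⟩

/-- For every `x ∈ X` and ordinals `‖x‖ ≤ α ≤ β < λ` one has
`x ∈ V_β(x) ⊆ V_α(x)`; consequently the family `τ` of all `U ⊆ X` such that every `x ∈ U`
admits `α ∈ [‖x‖, λ)` with `V_α(x) ⊆ U` is a topology on `X`. -/
theorem mem_Vnbhd_self_and_mono_and_tauSet_topology (lam : Cardinal.{u}) (hlam : ℵ₀ ≤ lam) :
    (∀ (x : ↥(Xset lam)) (α β : Ordinal.{u}), nrm x.1 ≤ α → α ≤ β → β < lam.ord →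
      x ∈ Vnbhd lam x β ∧ Vnbhd lam x β ⊆ Vnbhd lam x α) ∧
    ∃ t : TopologicalSpace ↥(Xset lam),
      ∀ U : Set ↥(Xset lam), IsOpen[t] U ↔ U ∈ tauSet lam :=
  ⟨fun x _ _ hα hαβ _ => ⟨mem_Vnbhd_self x (hα.trans hαβ), Vnbhd_mono x hα hαβ⟩,
    tau lam hlam, fun _ => Iff.rfl⟩

end LawsonExample
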